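/- Given integers k, t ∈ ℕ with k ≥ 3 and a constant β > 0, the following holds for any k-vertex graph F and all sufficiently large n ∈ ℕ. Let G be an n-vertex graph with a partition 𝒫 = {V_1, …, V_C} of V(G) for some integer C such that each V_i is (F, βn, t)-closed and |V_i| ≥ βn. If S is a k-element subset of V(G) such that the index vector i_𝒫(S) is (F,β)-robust, then S has at least (β/(k³t))n pairwise vertex-disjoint (F,t)-absorbers. -/

import Mathlib

open Finset

namespace RTT

variable {k n : ℕ}

/-- `S` spans a copy of the `k`-vertex graph `F` in `G`:
there is an injective graph homomorphism from `F` to `G` with image exactly `S`. -/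
def SpansCopy (F : SimpleGraph (Fin k)) (G : SimpleGraph (Fin n))
    (S : Finset (Fin n)) : Prop :=
  ∃ f : Fin k → Fin n, Function.Injective f ∧
    (∀ a b, F.Adj a b → G.Adj (f a) (f b)) ∧ Finset.image f Finset.univ = S

/-- `T` is an `F`-tiling in `G`: a collection of pairwise vertex-disjoint vertex sets,
each spanning a copy of `F`. -/
def IsTiling (F : SimpleGraph (Fin k)) (G : SimpleGraph (Fin n))
    (T : Finset (Finset (Fin n))) : Prop :=
  (∀ S ∈ T, SpansCopy F G S) ∧ ∀ S ∈ T, ∀ S' ∈ T, S ≠ S' → Disjoint S S'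

/-- The induced subgraph of `G` on the vertex set `A` has a perfect `F`-tiling. -/
def PerfTilingOn (F : SimpleGraph (Fin k)) (G : SimpleGraph (Fin n))
    (A : Finset (Fin n)) : Prop :=
  ∃ T : Finset (Finset (Fin n)), IsTiling F G T ∧ T.biUnion id = A

/-- The minimum degree of `G` is at least `x`. -/
def MinDegGE (G : SimpleGraph (Fin n)) (x : ℝ) : Prop :=
  ∀ v : Fin n, x ≤ ((G.neighborSet v).ncard : ℝ)

/-- The `r`-independence number of `G` is at most `x`: every vertex set whose induced
subgraph contains no copy of `K_r` has size at most `x`. -/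
def IndepBound (G : SimpleGraph (Fin n)) (r : ℕ) (x : ℝ) : Prop :=
  ∀ S : Finset (Fin n), (∀ T ⊆ S, ¬ G.IsNClique r T) → (S.card : ℝ) ≤ x

/-- `α*(G) ≤ x`: every bipartite hole of `G` has size at most `x`. -/
def HoleBound (G : SimpleGraph (Fin n)) (x : ℝ) : Prop :=
  ∀ (s : ℕ) (U₁ U₂ : Finset (Fin n)), Disjoint U₁ U₂ → U₁.card = s → U₂.card = s →
    (∀ u ∈ U₁, ∀ v ∈ U₂, ¬ G.Adj u v) → (s : ℝ) ≤ x

/-- `A` is a `ξ`-absorbing set with respect to `V'` (for the `k`-vertex graph `F`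
in the `n`-vertex graph `G`). -/
def IsAbsorbingSet (F : SimpleGraph (Fin k)) (G : SimpleGraph (Fin n)) (ξ : ℝ)
    (V' A : Finset (Fin n)) : Prop :=
  ∀ U : Finset (Fin n), U ⊆ V' \ A → (U.card : ℝ) ≤ ξ * n →
    k ∣ (A ∪ U).card → PerfTilingOn F G (A ∪ U)

/-- `A` is an `(F,t)`-absorber for the `k`-set `S`. -/
def IsAbsorber (F : SimpleGraph (Fin k)) (G : SimpleGraph (Fin n)) (t : ℕ)
    (S A : Finset (Fin n)) : Prop :=
  Disjoint A S ∧ A.card ≤ k ^ 2 * t ∧ PerfTilingOn F G A ∧ PerfTilingOn F G (A ∪ S)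

/-- `S` has a family of at least `x` pairwise vertex-disjoint `(F,t)`-absorbers in `G`. -/
def HasManyAbsorbers (F : SimpleGraph (Fin k)) (G : SimpleGraph (Fin n)) (t : ℕ)
    (S : Finset (Fin n)) (x : ℝ) : Prop :=
  ∃ 𝒜 : Finset (Finset (Fin n)), x ≤ (𝒜.card : ℝ) ∧
    (∀ A ∈ 𝒜, IsAbsorber F G t S A) ∧
    ∀ A ∈ 𝒜, ∀ A' ∈ 𝒜, A ≠ A' → Disjoint A A'

/-- `𝒮` is an `F`-fan at `v` in `U`: a collection of pairwise disjoint `(k-1)`-sets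
`S ⊆ U \ {v}` such that `{v} ∪ S` spans a copy of `F`; its size is `𝒮.card`. -/
def IsFan (F : SimpleGraph (Fin k)) (G : SimpleGraph (Fin n)) (v : Fin n)
    (U : Finset (Fin n)) (𝒮 : Finset (Finset (Fin n))) : Prop :=
  (∀ S ∈ 𝒮, S ⊆ U.erase v ∧ S.card = k - 1 ∧ SpansCopy F G (insert v S)) ∧
    ∀ S ∈ 𝒮, ∀ S' ∈ 𝒮, S ≠ S' → Disjoint S S'

/-- `u` and `v` are `(F, m, t)`-reachable in `G`. -/
def FReachable (F : SimpleGraph (Fin k)) (G : SimpleGraph (Fin n)) (m : ℝ) (t : ℕ)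
    (u v : Fin n) : Prop :=
  ∀ W : Finset (Fin n), (W.card : ℝ) ≤ m →
    ∃ S : Finset (Fin n), Disjoint S W ∧ u ∉ S ∧ v ∉ S ∧ S.card ≤ k * t - 1 ∧
      PerfTilingOn F G (insert u S) ∧ PerfTilingOn F G (insert v S)

/-- `U` is `(F, m, t)`-closed in `G`. -/
def FClosed (F : SimpleGraph (Fin k)) (G : SimpleGraph (Fin n)) (m : ℝ) (t : ℕ)
    (U : Finset (Fin n)) : Prop :=
  ∀ u ∈ U, ∀ v ∈ U, u ≠ v → FReachable F G m t u v

/-- `P` is a partition of the vertex set of an `n`-vertex graph into `C` parts. -/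
def IsPartition {C : ℕ} (P : Fin C → Finset (Fin n)) : Prop :=
  (∀ i j, i ≠ j → Disjoint (P i) (P j)) ∧ Finset.univ.biUnion P = Finset.univ

/-- The `k`-vector `v` is `(F, β)`-robust with respect to the partition `P`:
it has coordinate sum `k`, and avoiding any set `W` of at most `βn` vertices there is
a copy of `F` whose vertex set has index vector `v`. -/
def RobustVec (F : SimpleGraph (Fin k)) (G : SimpleGraph (Fin n)) {C : ℕ}
    (P : Fin C → Finset (Fin n)) (β : ℝ) (v : Fin C → ℕ) : Prop :=
  (∑ i, v i) = k ∧
    ∀ W : Finset (Fin n), (W.card : ℝ) ≤ β * n →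
      ∃ S : Finset (Fin n), Disjoint S W ∧ SpansCopy F G S ∧ ∀ i, (S ∩ P i).card = v i

end RTT

/-!
An absorber for `S` is built from a second copy `S''` of `F` with the same index vector as `S`,
found by robustness away from everything used so far, together with a connector `B`: pairing
each vertex of `S` with a vertex of `S''` in the same part, closedness of that part supplies
a set of at most `kt - 1` vertices that tiles with either vertex of the pair. Then both
`S'' ∪ B` and `S ∪ S'' ∪ B` tile, and `|S'' ∪ B| ≤ k + k(kt - 1) = k²t`. Each absorber only
uses `O(k²t)` vertices, so as long as fewer than `βn / k³t` of them have been chosen the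
vertices used stay below the robustness and reachability threshold `βn`, and a greedy choice
never gets stuck.
-/

namespace RTT

variable {k n : ℕ} {F : SimpleGraph (Fin k)} {G : SimpleGraph (Fin n)}

theorem SpansCopy.card_eq {S : Finset (Fin n)} (h : SpansCopy F G S) : S.card = k := by
  obtain ⟨f, hf, -, rfl⟩ := h
  rw [Finset.card_image_of_injective _ hf, Finset.card_univ, Fintype.card_fin]

theorem perfTilingOn_empty : PerfTilingOn F G ∅ :=
  ⟨∅, ⟨by simp, by simp⟩, by simp⟩

theorem SpansCopy.perfTilingOn {S : Finset (Fin n)} (h : SpansCopy F G S) :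
    PerfTilingOn F G S :=
  ⟨{S}, ⟨by simpa using h, by simp⟩, by simp⟩

theorem PerfTilingOn.union {A B : Finset (Fin n)} (hAB : Disjoint A B)
    (hA : PerfTilingOn F G A) (hB : PerfTilingOn F G B) : PerfTilingOn F G (A ∪ B) := by
  obtain ⟨T₁, ⟨hcopy₁, hdisj₁⟩, rfl⟩ := hA
  obtain ⟨T₂, ⟨hcopy₂, hdisj₂⟩, rfl⟩ := hB
  have hcross : ∀ X ∈ T₁, ∀ Y ∈ T₂, Disjoint X Y := fun X hX Y hY =>
    hAB.mono (Finset.subset_biUnion_of_mem id hX) (Finset.subset_biUnion_of_mem id hY)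
  refine ⟨T₁ ∪ T₂, ⟨?_, ?_⟩, Finset.union_biUnion⟩
  · intro X hX
    rcases Finset.mem_union.1 hX with h | h
    exacts [hcopy₁ X h, hcopy₂ X h]
  · intro X hX Y hY hXY
    rcases Finset.mem_union.1 hX with h | h <;> rcases Finset.mem_union.1 hY with h' | h'
    · exact hdisj₁ X h Y h' hXY
    · exact hcross X h Y h'
    · exact (hcross Y h' X h).symm
    · exact hdisj₂ X h Y h' hXY

/-- One step of the connector: `s ∈ S` is absorbed by the reachability set `S₀`, the rest of
`S` by `B`. -/
theorem perfTilingOn_union_of_insert_erase {S S₀ B W : Finset (Fin n)} {s : Fin n}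
    (hs : s ∈ S) (hSW : S ⊆ W) (hS₀ : Disjoint S₀ W) (hB : Disjoint B (W ∪ S₀))
    (h₀ : PerfTilingOn F G (insert s S₀)) (h₁ : PerfTilingOn F G (S.erase s ∪ B)) :
    PerfTilingOn F G (S ∪ (S₀ ∪ B)) := by
  have hdisj : Disjoint (insert s S₀) (S.erase s ∪ B) := by
    simp only [Finset.disjoint_left, Finset.mem_insert, Finset.mem_union,
      Finset.mem_erase] at *
    grind
  have hsplit : S ∪ (S₀ ∪ B) = insert s S₀ ∪ (S.erase s ∪ B) := by
    ext x
    simp only [Finset.mem_insert, Finset.mem_union, Finset.mem_erase]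
    grind
  exact hsplit ▸ h₀.union hdisj h₁

section Partition

variable {C : ℕ} {P : Fin C → Finset (Fin n)}

theorem IsPartition.exists_mem (hP : IsPartition P) (v : Fin n) : ∃ i, v ∈ P i := by
  have hv : v ∈ Finset.univ.biUnion P := hP.2 ▸ Finset.mem_univ v
  obtain ⟨i, -, hi⟩ := Finset.mem_biUnion.1 hv
  exact ⟨i, hi⟩

theorem IsPartition.card_inter_erase_eq (hP : IsPartition P) {S S' : Finset (Fin n)}
    (h : ∀ j, (S ∩ P j).card = (S' ∩ P j).card) {i : Fin C} {s s' : Fin n}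
    (hs : s ∈ S ∩ P i) (hs' : s' ∈ S' ∩ P i) (j : Fin C) :
    (S.erase s ∩ P j).card = (S'.erase s' ∩ P j).card := by
  rw [Finset.erase_inter, Finset.erase_inter]
  by_cases hji : j = i
  · subst hji
    rw [Finset.card_erase_of_mem hs, Finset.card_erase_of_mem hs', h]
  · have hsj : s ∉ P j := Finset.disjoint_right.1 (hP.1 j i hji) (Finset.mem_inter.1 hs).2
    have hs'j : s' ∉ P j := Finset.disjoint_right.1 (hP.1 j i hji) (Finset.mem_inter.1 hs').2
    rw [Finset.erase_eq_of_notMem (by simp [hsj]), Finset.erase_eq_of_notMem (by simp [hs'j])]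
    exact h j

theorem exists_connector {r : ℝ} {t : ℕ} (hP : IsPartition P)
    (hcl : ∀ i, FClosed F G r t (P i)) (m : ℕ) (S S' W : Finset (Fin n))
    (hS : S.card = m) (hS' : S'.card = m) (hSW : S ⊆ W) (hS'W : S' ⊆ W)
    (hSS' : Disjoint S S') (hindex : ∀ i, (S ∩ P i).card = (S' ∩ P i).card)
    (hW : ((W.card + m * (k * t - 1) : ℕ) : ℝ) ≤ r) :
    ∃ B : Finset (Fin n), Disjoint B W ∧ B.card ≤ m * (k * t - 1) ∧
      PerfTilingOn F G (S ∪ B) ∧ PerfTilingOn F G (S' ∪ B) := by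
  induction m generalizing S S' W with
  | zero =>
    rw [Finset.card_eq_zero] at hS hS'
    subst hS hS'
    exact ⟨∅, by simp, by simp, by simpa using perfTilingOn_empty,
      by simpa using perfTilingOn_empty⟩
  | succ m ih =>
    obtain ⟨s, hs⟩ := Finset.card_pos.1 (by rw [hS]; exact m.succ_pos)
    obtain ⟨i, hsi⟩ := hP.exists_mem s
    obtain ⟨s', hs'⟩ : (S' ∩ P i).Nonempty := by
      rw [← Finset.card_pos, ← hindex i]
      exact Finset.card_pos.2 ⟨s, Finset.mem_inter.2 ⟨hs, hsi⟩⟩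
    have hs'S' := (Finset.mem_inter.1 hs').1
    have hne : s ≠ s' := by rintro rfl; exact Finset.disjoint_left.1 hSS' hs hs'S'
    have hWr : (W.card : ℝ) ≤ r := le_trans (by exact_mod_cast Nat.le_add_right _ _) hW
    obtain ⟨S₀, hS₀W, -, -, hS₀, hS₀s, hS₀s'⟩ :=
      hcl i s hsi s' (Finset.mem_inter.1 hs').2 hne W hWr
    have hW' : (((W ∪ S₀).card + m * (k * t - 1) : ℕ) : ℝ) ≤ r := by
      refine le_trans (Nat.cast_le.2 ?_) hW
      have := Finset.card_union_le W S₀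
      rw [Nat.succ_mul]
      omega
    obtain ⟨B, hB, hBcard, hSB, hS'B⟩ := ih (S.erase s) (S'.erase s') (W ∪ S₀)
      (by rw [Finset.card_erase_of_mem hs, hS]; rfl)
      (by rw [Finset.card_erase_of_mem hs'S', hS']; rfl)
      ((Finset.erase_subset _ _).trans (hSW.trans Finset.subset_union_left))
      ((Finset.erase_subset _ _).trans (hS'W.trans Finset.subset_union_left))
      (hSS'.mono (Finset.erase_subset _ _) (Finset.erase_subset _ _))
      (hP.card_inter_erase_eq hindex (Finset.mem_inter.2 ⟨hs, hsi⟩) hs') hW'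
    refine ⟨S₀ ∪ B, Finset.disjoint_union_left.2 ⟨hS₀W, hB.mono_right Finset.subset_union_left⟩,
      ?_, perfTilingOn_union_of_insert_erase hs hSW hS₀W hB hS₀s hSB,
      perfTilingOn_union_of_insert_erase hs'S' hS'W hS₀W hB hS₀s' hS'B⟩
    calc (S₀ ∪ B).card ≤ S₀.card + B.card := Finset.card_union_le _ _
      _ ≤ (m + 1) * (k * t - 1) := by rw [Nat.succ_mul]; omega

theorem exists_absorber_disjoint {β : ℝ} {t : ℕ} (hk : 0 < k) (ht : 0 < t)
    (hP : IsPartition P) (hcl : ∀ i, FClosed F G (β * n) t (P i)) {S : Finset (Fin n)}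
    (hS : S.card = k) (hrob : RobustVec F G P β fun i => (S ∩ P i).card) (W : Finset (Fin n))
    (hW : ((W.card + k + k ^ 2 * t : ℕ) : ℝ) ≤ β * n) :
    ∃ A : Finset (Fin n), IsAbsorber F G t S A ∧ Disjoint A W ∧ A.Nonempty := by
  have hsize : k + k * (k * t - 1) = k ^ 2 * t := by
    have : 1 ≤ k * t := Nat.one_le_iff_ne_zero.2 (by positivity)
    calc k + k * (k * t - 1) = k * (k * t - 1 + 1) := by ring
      _ = k ^ 2 * t := by rw [Nat.sub_add_cancel this]; ring
  have hWS : ((W ∪ S).card : ℝ) ≤ β * n := by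
    refine le_trans (Nat.cast_le.2 ?_) hW
    have := Finset.card_union_le W S
    omega
  obtain ⟨S'', hS''WS, hS''copy, hindex⟩ := hrob.2 (W ∪ S) hWS
  have hS''card := hS''copy.card_eq
  obtain ⟨B, hB, hBcard, hSB, hS''B⟩ := exists_connector hP hcl k S S'' (W ∪ S ∪ S'') hS
    hS''card (Finset.subset_union_right.trans Finset.subset_union_left) Finset.subset_union_right
    (hS''WS.mono_right Finset.subset_union_right).symm (fun i => (hindex i).symm) (by
      refine le_trans (Nat.cast_le.2 ?_) hW
      have := Finset.card_union_le (W ∪ S) S''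
      have := Finset.card_union_le W S
      omega)
  simp only [Finset.disjoint_union_right] at hS''WS hB
  refine ⟨S'' ∪ B, ⟨Finset.disjoint_union_left.2 ⟨hS''WS.2, hB.1.2⟩, ?_, hS''B, ?_⟩,
    Finset.disjoint_union_left.2 ⟨hS''WS.1, hB.1.1⟩,
    (Finset.card_pos.1 (by omega)).mono Finset.subset_union_left⟩
  · calc (S'' ∪ B).card ≤ S''.card + B.card := Finset.card_union_le _ _
      _ ≤ k ^ 2 * t := by omega
  · have hsplit : S'' ∪ B ∪ S = S'' ∪ (S ∪ B) := by
      rw [Finset.union_assoc, Finset.union_comm B]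
    rw [hsplit]
    exact hS''copy.perfTilingOn.union (Finset.disjoint_union_right.2 ⟨hS''WS.2, hB.2.symm⟩) hSB

theorem exists_disjoint_absorbers {β : ℝ} {t : ℕ} (hk : 0 < k) (ht : 0 < t)
    (hP : IsPartition P) (hcl : ∀ i, FClosed F G (β * n) t (P i)) {S : Finset (Fin n)}
    (hS : S.card = k) (hrob : RobustVec F G P β fun i => (S ∩ P i).card) (c : ℕ)
    (hc : ((c * (k ^ 2 * t) + k : ℕ) : ℝ) ≤ β * n) :
    ∃ 𝒜 : Finset (Finset (Fin n)), 𝒜.card = c ∧ (∀ A ∈ 𝒜, IsAbsorber F G t S A) ∧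
      ∀ A ∈ 𝒜, ∀ A' ∈ 𝒜, A ≠ A' → Disjoint A A' := by
  induction c with
  | zero => exact ⟨∅, by simp, by simp, by simp⟩
  | succ c ih =>
    obtain ⟨𝒜, hcard, habs, hdisj⟩ :=
      ih (le_trans (Nat.cast_le.2 (by gcongr; omega)) hc)
    have hused : (𝒜.biUnion id).card ≤ c * (k ^ 2 * t) := by
      calc (𝒜.biUnion id).card ≤ ∑ A ∈ 𝒜, A.card := Finset.card_biUnion_le
        _ ≤ 𝒜.card * (k ^ 2 * t) := Finset.sum_le_card_nsmul 𝒜 _ _ fun A hA => (habs A hA).2.1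
        _ = c * (k ^ 2 * t) := by rw [hcard]
    obtain ⟨A, hA, hAused, hAne⟩ := exists_absorber_disjoint hk ht hP hcl hS hrob (𝒜.biUnion id)
      (le_trans (Nat.cast_le.2 (by rw [Nat.succ_mul]; omega)) hc)
    have hAdisj : ∀ A' ∈ 𝒜, Disjoint A A' := fun A' hA' =>
      hAused.mono_right (Finset.subset_biUnion_of_mem id hA')
    have hA𝒜 : A ∉ 𝒜 := fun h =>
      hAne.ne_empty ((Finset.disjoint_self_iff_empty _).1 (hAdisj A h))
    refine ⟨insert A 𝒜, by rw [Finset.card_insert_of_notMem hA𝒜, hcard], ?_, ?_⟩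
    · simpa [hA] using habs
    · simp only [Finset.mem_insert]
      rintro X (rfl | hX) Y (rfl | hY) hXY
      exacts [absurd rfl hXY, hAdisj Y hY, (hAdisj X hX).symm, hdisj X hX Y hY hXY]

end Partition

end RTT

theorem natCeil_div_mul_add_le {x : ℝ} {k t : ℕ} (hk : 2 ≤ k) (ht : 0 < t)
    (hx : 2 * ((k : ℝ) ^ 2 * t + k) ≤ x) :
    ((⌈x / (k ^ 3 * t)⌉₊ * (k ^ 2 * t) + k : ℕ) : ℝ) ≤ x := by
  have hk' : (2 : ℝ) ≤ k := by exact_mod_cast hk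
  have ht' : (0 : ℝ) < t := by exact_mod_cast ht
  have hx₀ : 0 ≤ x := le_trans (by positivity) hx
  have hceil := Nat.ceil_lt_add_one (div_nonneg hx₀ (by positivity : (0 : ℝ) ≤ k ^ 3 * t))
  have hcount : (⌈x / (k ^ 3 * t)⌉₊ : ℝ) * (k ^ 2 * t) ≤ x / k + k ^ 2 * t :=
    calc _ ≤ (x / (k ^ 3 * t) + 1) * (k ^ 2 * t) := by gcongr
      _ = x / k + k ^ 2 * t := by field_simp
  have : x / k ≤ x / 2 := by gcongr
  push_cast
  linarith

open RTT in
/-- In a graph with a closed partition into large parts, every `k`-set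
whose index vector is `(F,β)`-robust has at least `(β/(k³t))n` pairwise vertex-disjoint
`(F,t)`-absorbers. -/
theorem many_absorbers_from_closed_partition :
    ∀ k t : ℕ, 3 ≤ k → ∀ β : ℝ, 0 < β →
    ∃ N : ℕ, ∀ n : ℕ, N ≤ n →
      ∀ F : SimpleGraph (Fin k), ∀ G : SimpleGraph (Fin n),
      ∀ C : ℕ, ∀ P : Fin C → Finset (Fin n), IsPartition P →
        (∀ i, FClosed F G (β * n) t (P i)) →
        (∀ i, β * n ≤ (((P i).card : ℕ) : ℝ)) →
        ∀ S : Finset (Fin n), S.card = k →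
          RobustVec F G P β (fun i => (S ∩ P i).card) →
          HasManyAbsorbers F G t S ((β / ((k : ℝ) ^ 3 * (t : ℝ))) * n) := by
  intro k t hk β hβ
  refine ⟨⌈2 * ((k : ℝ) ^ 2 * t + k) / β⌉₊, fun n hn F G C P hP hcl _ S hS hrob => ?_⟩
  rcases Nat.eq_zero_or_pos t with rfl | ht
  -- the target `β / (k ^ 3 * 0) * n` is `0`, as division by zero is zero in `ℝ`
  · exact ⟨∅, by simp, by simp, by simp⟩
  have hβn : 2 * ((k : ℝ) ^ 2 * t + k) ≤ β * n := by
    rw [mul_comm β]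
    exact (div_le_iff₀ hβ).1 (Nat.ceil_le.1 hn)
  obtain ⟨𝒜, hcard, habs, hdisj⟩ := exists_disjoint_absorbers (by omega) ht hP hcl hS hrob _
    (natCeil_div_mul_add_le (by omega) ht hβn)
  refine ⟨𝒜, ?_, habs, hdisj⟩
  rw [hcard, div_mul_eq_mul_div]
  exact Nat.le_ceil _
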